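/- arXiv:1912.10231 — 2 statements merged into one kernel-verified Lean document; each statement's English description precedes it below -/
import Mathlib

section
/- Bauer–Fike type bound: if A is diagonalizable as A = V D V⁻¹ with D diagonal, then for any matrix Δ of the same size, every eigenvalue μ of A + Δ satisfies |μ - λ| ≤ ‖V‖‖V⁻¹‖‖Δ‖ for some eigenvalue λ of A, where ‖·‖ is the spectral (operator 2-) norm. -/
open scoped Matrix.Norms.L2Operator ENNReal NNReal
open MeasureTheory ProbabilityTheory Filter

/-- Spectral radius (as a real number) of a real square matrix, via its complex spectrum. -/
noncomputable def specRadR {n : ℕ} (M : Matrix (Fin n) (Fin n) ℝ) : ℝ :=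
  (spectralRadius ℂ (M.map Complex.ofReal)).toReal

/-- Spectral radius (as a real number) of a complex square matrix. -/
noncomputable def specRadC {n : ℕ} (M : Matrix (Fin n) (Fin n) ℂ) : ℝ :=
  (spectralRadius ℂ M).toReal

/-- Complementary CDF of the standard normal distribution. -/
noncomputable def Qccdf (x : ℝ) : ℝ := ((gaussianReal 0 1) (Set.Ici x)).toReal

/-! Conjugating by `V` turns `A + Δ` into `D + E` with `E = V⁻¹ Δ V`, which has the same spectrum,
and `‖E‖ ≤ ‖V⁻¹‖ ‖Δ‖ ‖V‖`. If `μ` were farther than `‖E‖` from every diagonal entry of `D`, the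
resolvent `(μ - D)⁻¹` would be diagonal with norm `< ‖E‖⁻¹`, so
`μ - (D + E) = (μ - D) (1 - (μ - D)⁻¹ E)` would be invertible by the Neumann series. -/

theorem spectrum.one_le_norm_resolvent_mul_norm {𝕜 A : Type*} [NormedField 𝕜] [NormedRing A]
    [HasSummableGeomSeries A] [Algebra 𝕜 A] {a b : A} {μ : 𝕜}
    (hab : μ ∈ spectrum 𝕜 (a + b)) (ha : μ ∉ spectrum 𝕜 a) :
    1 ≤ ‖resolvent a μ‖ * ‖b‖ := by
  by_contra! hsmall
  have hunit : IsUnit (algebraMap 𝕜 A μ - a) := spectrum.notMem_iff.mp ha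
  have hfactor : algebraMap 𝕜 A μ - (a + b)
      = (algebraMap 𝕜 A μ - a) * (1 - resolvent a μ * b) := by
    rw [mul_sub, mul_one, ← mul_assoc, resolvent, Ring.mul_inverse_cancel _ hunit, one_mul,
      sub_sub]
  refine spectrum.mem_iff.mp hab ?_
  rw [hfactor]
  exact hunit.mul (isUnit_one_sub_of_norm_lt_one ((norm_mul_le _ _).trans_lt hsmall))

theorem spectrum.units_conjugate_add {R A : Type*} [CommSemiring R] [Ring A] [Algebra R A]
    (u : Aˣ) (a b : A) :
    spectrum R (u * a * u⁻¹ + b) = spectrum R (a + u⁻¹ * b * u) := by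
  rw [← spectrum.units_conjugate (u := u) (a := a + u⁻¹ * b * u)]
  congr 1
  simp [mul_add, add_mul, mul_assoc]

namespace Matrix

variable {n 𝕜 : Type*} [Fintype n] [DecidableEq n]

theorem resolvent_diagonal [Field 𝕜] (d : n → 𝕜) {μ : 𝕜} (hμ : ∀ i, μ ≠ d i) :
    resolvent (diagonal d) μ = diagonal fun i => (μ - d i)⁻¹ := by
  rw [resolvent, ← nonsing_inv_eq_ringInverse, algebraMap_eq_diagonal, diagonal_sub]
  refine inv_eq_left_inv ?_
  rw [diagonal_mul_diagonal, ← diagonal_one]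
  congr 1
  ext i
  exact inv_mul_cancel₀ (sub_ne_zero.mpr (hμ i))

theorem exists_norm_sub_le_of_mem_spectrum_diagonal_add [RCLike 𝕜] (d : n → 𝕜)
    (E : Matrix n n 𝕜) {μ : 𝕜} (hμ : μ ∈ spectrum 𝕜 (diagonal d + E)) :
    ∃ i, ‖μ - d i‖ ≤ ‖E‖ := by
  by_contra! hfar
  have hd : ∀ i, μ ≠ d i := fun i hi => by
    simpa [hi] using (norm_nonneg E).trans_lt (hfar i)
  have hres := spectrum.one_le_norm_resolvent_mul_norm hμ (by simpa [eq_comm] using hd)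
  rw [resolvent_diagonal d hd, l2_opNorm_diagonal] at hres
  rcases (norm_nonneg E).eq_or_lt with hE | hE
  · rw [← hE, mul_zero] at hres
    exact zero_lt_one.not_ge hres
  have hsmall : ‖fun i => (μ - d i)⁻¹‖ < ‖E‖⁻¹ :=
    (pi_norm_lt_iff (inv_pos.mpr hE)).mpr fun i => by
      rw [norm_inv]
      exact inv_strictAnti₀ hE (hfar i)
  have := mul_lt_mul_of_pos_right hsmall hE
  rw [inv_mul_cancel₀ hE.ne'] at this
  exact this.not_ge hres

end Matrix

/-- Bauer–Fike: if `A = V D V⁻¹` with `D` diagonal and `V` invertible, then every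
eigenvalue `μ` of `A + Δ` is within `‖V‖‖V⁻¹‖‖Δ‖` (spectral norm) of some eigenvalue of `A`. -/
theorem stmt1 {n : ℕ} (A Δ V D : Matrix (Fin n) (Fin n) ℂ)
    (hV : IsUnit V.det) (hD : D.IsDiag) (hA : A = V * D * V⁻¹)
    (μ : ℂ) (hμ : μ ∈ spectrum ℂ (A + Δ)) :
    ∃ lam ∈ spectrum ℂ A, ‖μ - lam‖ ≤ ‖V‖ * ‖V⁻¹‖ * ‖Δ‖ := by
  obtain ⟨u, rfl⟩ : IsUnit V := (Matrix.isUnit_iff_isUnit_det V).mpr hV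
  obtain ⟨d, rfl⟩ : ∃ d, D = Matrix.diagonal d := ⟨D.diag, hD.diagonal_diag.symm⟩
  rw [← Matrix.coe_units_inv] at hA ⊢
  subst hA
  rw [spectrum.units_conjugate_add] at hμ
  obtain ⟨i, hi⟩ := Matrix.exists_norm_sub_le_of_mem_spectrum_diagonal_add _ _ hμ
  refine ⟨d i, ?_, hi.trans ?_⟩
  · rw [spectrum.units_conjugate, spectrum_diagonal]
    exact Set.mem_range_self i
  · exact norm_mul₃_le.trans_eq (by ring)
end

section
/- Let z_i ~ N(0, σ_i²), i ∈ S, be independent Gaussians and let B J_i be fixed n×n real matrices. Define the perturbed matrix Ã = A_cl + Σ_{i∈S} z_i B J_i and v̲ = Σ_{i∈S} σ_i² (tr(B J_i))². If v̲ > 0 and μ = tr(A_cl), then P(ρ(Ã) ≥ 1) ≥ Q((n+μ)/√v̲) + Q((n−μ)/√v̲). -/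
open scoped Matrix.Norms.L2Operator ENNReal NNReal
open MeasureTheory ProbabilityTheory Filter

theorem spectrum.norm_le_toReal_spectralRadius {𝕜 A : Type*} [NormedField 𝕜] [NormedRing A]
    [NormedAlgebra 𝕜 A] [CompleteSpace A] {a : A} {k : 𝕜} (hk : k ∈ spectrum 𝕜 a) :
    ‖k‖ ≤ (spectralRadius 𝕜 a).toReal := by
  have hfinite : spectralRadius 𝕜 a ≠ ⊤ :=
    ne_top_of_le_ne_top (ENNReal.coe_ne_top (r := ‖a‖₊ * ‖(1 : A)‖₊)) <| iSup₂_le fun k hk ↦ by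
      exact_mod_cast spectrum.norm_le_norm_mul_of_mem hk
  simpa using ENNReal.toReal_mono hfinite (le_iSup₂ (f := fun k (_ : k ∈ spectrum 𝕜 a) ↦
    (‖k‖₊ : ℝ≥0∞)) k hk)

theorem Matrix.norm_trace_le_card_mul_spectralRadius {ι : Type*} [Fintype ι] [DecidableEq ι]
    (M : Matrix ι ι ℂ) :
    ‖M.trace‖ ≤ Fintype.card ι * (spectralRadius ℂ M).toReal := by
  have hcard : Multiset.card M.charpoly.roots = Fintype.card ι := by
    rw [Polynomial.splits_iff_card_roots.mp (IsAlgClosed.splits _), M.charpoly_natDegree_eq_dim]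
  calc ‖M.trace‖ = ‖M.charpoly.roots.sum‖ := by rw [M.trace_eq_sum_roots_charpoly]
    _ ≤ (M.charpoly.roots.map (‖·‖)).sum := norm_multiset_sum_le _
    -- through the scoped L2 operator norm; the spectral radius does not depend on the norm
    _ ≤ (M.charpoly.roots.map fun _ ↦ (spectralRadius ℂ M).toReal).sum :=
        Multiset.sum_map_le_sum_map _ _ fun μ hμ ↦ spectrum.norm_le_toReal_spectralRadius <|
          Matrix.mem_spectrum_iff_isRoot_charpoly.mpr (Polynomial.isRoot_of_mem_roots hμ)
    _ = Fintype.card ι * (spectralRadius ℂ M).toReal := by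
        rw [Multiset.map_const', Multiset.sum_replicate, hcard, nsmul_eq_mul]

theorem Matrix.abs_trace_le_mul_specRadR {n : ℕ} (M : Matrix (Fin n) (Fin n) ℝ) :
    |M.trace| ≤ n * specRadR M := by
  have htrace : (M.map Complex.ofReal).trace = M.trace := by
    simp [Matrix.trace]
  simpa [specRadR, htrace] using (M.map Complex.ofReal).norm_trace_le_card_mul_spectralRadius

theorem gaussianReal_map_sum_of_iIndepFun {Ω ι : Type*} [MeasurableSpace Ω] {P : Measure Ω}
    [IsProbabilityMeasure P] {X : ι → Ω → ℝ} (hX : ∀ i, Measurable (X i))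
    (hindep : iIndepFun X P) {m : ι → ℝ} {v : ι → ℝ≥0} (S : Finset ι)
    (hlaw : ∀ i ∈ S, P.map (X i) = gaussianReal (m i) (v i)) :
    P.map (∑ i ∈ S, X i) = gaussianReal (∑ i ∈ S, m i) (∑ i ∈ S, v i) := by
  classical
  induction S using Finset.induction_on with
  | empty =>
    rw [Finset.sum_empty, Finset.sum_empty, Finset.sum_empty, gaussianReal_zero_var]
    exact (Measure.map_const P 0).trans (by simp)
  | @insert j S hj ih =>
    simp only [Finset.sum_insert hj]
    exact gaussianReal_add_gaussianReal_of_indepFun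
      (hindep.indepFun_finsetSum_of_notMem hX hj).symm (hlaw j (S.mem_insert_self j))
      (ih fun i hi ↦ hlaw i (Finset.mem_insert_of_mem hi))

theorem gaussianReal_map_affine (μ : ℝ) (v : ℝ≥0) :
    (gaussianReal 0 1).map (fun x ↦ √v * x + μ) = gaussianReal μ v := by
  have hcomp : (fun x : ℝ ↦ √v * x + μ) = (· + μ) ∘ (√v * ·) := rfl
  rw [hcomp, ← Measure.map_map (by fun_prop) (by fun_prop), gaussianReal_map_const_mul,
    gaussianReal_map_add_const]
  congr
  · ring
  · ext; simp

theorem gaussianReal_real_Ici_eq_Qccdf (μ : ℝ) {v : ℝ≥0} (hv : v ≠ 0) (a : ℝ) :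
    (gaussianReal μ v).real (Set.Ici a) = Qccdf ((a - μ) / √v) := by
  have hsqrt : 0 < √(v : ℝ) := Real.sqrt_pos.mpr (by positivity)
  have hpre : (fun x ↦ √v * x + μ) ⁻¹' Set.Ici a = Set.Ici ((a - μ) / √v) := by
    ext x
    simp only [Set.mem_preimage, Set.mem_Ici, div_le_iff₀ hsqrt]
    constructor <;> intro h <;> linarith
  rw [← gaussianReal_map_affine, map_measureReal_apply (by fun_prop) measurableSet_Ici, hpre,
    Qccdf, measureReal_def]

theorem gaussianReal_real_Iic_eq_Qccdf (μ : ℝ) {v : ℝ≥0} (hv : v ≠ 0) (a : ℝ) :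
    (gaussianReal μ v).real (Set.Iic a) = Qccdf ((μ - a) / √v) := by
  have hpre : Set.Iic a = (fun x ↦ -x) ⁻¹' Set.Ici (-a) := by
    ext x
    simp
  rw [hpre, ← map_measureReal_apply measurable_neg measurableSet_Ici, gaussianReal_map_neg,
    gaussianReal_real_Ici_eq_Qccdf _ hv]
  ring_nf

theorem gaussianReal_real_le_abs_eq_Qccdf_add_Qccdf (μ : ℝ) {v : ℝ≥0} (hv : v ≠ 0) {a : ℝ}
    (ha : 0 < a) :
    (gaussianReal μ v).real {x | a ≤ |x|} = Qccdf ((a + μ) / √v) + Qccdf ((a - μ) / √v) := by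
  have hset : {x : ℝ | a ≤ |x|} = Set.Iic (-a) ∪ Set.Ici a := by
    ext x
    simp [le_abs', or_comm]
  rw [hset, measureReal_union (Set.Iic_disjoint_Ici.mpr (by linarith)) measurableSet_Ici,
    gaussianReal_real_Iic_eq_Qccdf _ hv, gaussianReal_real_Ici_eq_Qccdf _ hv]
  ring_nf

theorem hasLaw_trace_add_sum_smul {Ω ι κ : Type*} [MeasurableSpace Ω]
    {P : Measure Ω} [IsProbabilityMeasure P] [Fintype κ] (A : Matrix κ κ ℝ)
    (B : ι → Matrix κ κ ℝ) {z : ι → Ω → ℝ} (hmeas : ∀ i, Measurable (z i))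
    (hindep : iIndepFun z P) {v : ι → ℝ≥0} (S : Finset ι)
    (hlaw : ∀ i ∈ S, P.map (z i) = gaussianReal 0 (v i)) :
    HasLaw (fun ω ↦ (A + ∑ i ∈ S, z i ω • B i).trace)
      (gaussianReal A.trace (∑ i ∈ S, ‖(B i).trace‖₊ ^ 2 * v i)) P := by
  set X : ι → Ω → ℝ := fun i ω ↦ (B i).trace * z i ω
  have hX : ∀ i, Measurable (X i) := fun i ↦ (hmeas i).const_mul _
  have hXlaw : ∀ i ∈ S, P.map (X i) = gaussianReal 0 (‖(B i).trace‖₊ ^ 2 * v i) := by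
    intro i hi
    convert (gaussianReal_const_mul ⟨(hmeas i).aemeasurable, hlaw i hi⟩ (B i).trace).map_eq
      using 2
    · ring
    · ext; simp
  have hsum := gaussianReal_map_sum_of_iIndepFun hX
    (hindep.comp (fun i x ↦ (B i).trace * x) fun i ↦ measurable_const_mul _) S hXlaw
  have htrace : (fun ω ↦ (A + ∑ i ∈ S, z i ω • B i).trace) = (A.trace + ·) ∘ ∑ i ∈ S, X i := by
    ext ω
    simp [X, Matrix.trace_sum, mul_comm]
  rw [htrace]
  refine ⟨by fun_prop, ?_⟩
  rw [← Measure.map_map (by fun_prop) (by fun_prop), hsum, Finset.sum_const_zero,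
    gaussianReal_map_const_add, zero_add]

/-- lower bound on the probability of instability: with
`Ã = A_cl + ∑_{i∈S} z_i B J_i`, `z_i ~ N(0, σ_i²)` independent, and
`v̲ = ∑_{i∈S} σ_i² (tr(B J_i))² > 0`, `μ = tr(A_cl)`, we have
`P(ρ(Ã) ≥ 1) ≥ Q((n+μ)/√v̲) + Q((n−μ)/√v̲)`. -/
theorem stmt5 {Ω : Type*} [MeasurableSpace Ω] (P : Measure Ω) [IsProbabilityMeasure P]
    {n : ℕ} {ι : Type*} (S : Finset ι) (z : ι → Ω → ℝ) (σ : ι → ℝ≥0)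
    (BJ : ι → Matrix (Fin n) (Fin n) ℝ) (Acl : Matrix (Fin n) (Fin n) ℝ)
    (hmeas : ∀ i, Measurable (z i))
    (hindep : iIndepFun z P)
    (hdist : ∀ i ∈ S, Measure.map (z i) P = gaussianReal 0 (σ i ^ 2))
    (hv : 0 < ∑ i ∈ S, (σ i : ℝ) ^ 2 * (Matrix.trace (BJ i)) ^ 2) :
    Qccdf ((n + Matrix.trace Acl) /
        Real.sqrt (∑ i ∈ S, (σ i : ℝ) ^ 2 * (Matrix.trace (BJ i)) ^ 2)) +
      Qccdf ((n - Matrix.trace Acl) /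
        Real.sqrt (∑ i ∈ S, (σ i : ℝ) ^ 2 * (Matrix.trace (BJ i)) ^ 2)) ≤
    (P {ω | 1 ≤ specRadR (Acl + ∑ i ∈ S, z i ω • BJ i)}).toReal := by
  have hlaw := hasLaw_trace_add_sum_smul Acl BJ hmeas hindep S hdist
  set v : ℝ≥0 := ∑ i ∈ S, ‖(BJ i).trace‖₊ ^ 2 * σ i ^ 2
  have hv_coe : (v : ℝ) = ∑ i ∈ S, (σ i : ℝ) ^ 2 * (BJ i).trace ^ 2 := by
    simp [v, mul_comm]
  have hv_ne : v ≠ 0 := by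
    rw [← NNReal.coe_ne_zero, hv_coe]
    exact hv.ne'
  have hn : (0 : ℝ) < n := by
    rcases Nat.eq_zero_or_pos n with rfl | hn
    · simp [Matrix.trace] at hv
    · exact_mod_cast hn
  have hevent : {ω | (n : ℝ) ≤ |(Acl + ∑ i ∈ S, z i ω • BJ i).trace|} ⊆
      {ω | 1 ≤ specRadR (Acl + ∑ i ∈ S, z i ω • BJ i)} := fun ω hω ↦
    (le_mul_iff_one_le_right hn).mp (by simpa using hω.trans (Matrix.abs_trace_le_mul_specRadR _))
  rw [← hv_coe, ← gaussianReal_real_le_abs_eq_Qccdf_add_Qccdf _ hv_ne hn,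
    ← hlaw.measureReal_eq (measurableSet_le measurable_const (by fun_prop))]
  exact measureReal_mono hevent
end
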